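/- arXiv:2509.11282 — 12 statements merged into one kernel-verified Lean document; each statement's English description precedes it below -/
import Mathlib

section
/- Let (A,·,P) be a commutative differential algebra and [x,y] = x·P(y) − P(x)·y the corresponding Witt type Lie bracket. Then (A,·,[-,-],P) is a relative Poisson algebra: P is a derivation of both products and the relative Leibniz rule [z, x·y] = [z,x]·y + x·[z,y] + x·y·P(z) holds for all x,y,z ∈ A. -/
/-! The Witt bracket `[x, y] = x·P y - P x·y` is built from the product and the derivation `P`
only, so every identity reduces, after expanding `P` on products by the Leibniz rule, to an
identity in the free commutative associative algebra generated by `x, y, z` and their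
derivatives, where the terms cancel in pairs. -/

section WittBracket

variable {K A : Type*} [CommSemiring K] [AddCommGroup A] [Module K A]
  (mul : A →ₗ[K] A →ₗ[K] A) (P : A →ₗ[K] A)

def wittBracket (x y : A) : A := mul x (P y) - mul (P x) y

variable {mul P}

theorem wittBracket_anticomm (hcomm : ∀ x y : A, mul x y = mul y x) (x y : A) :
    wittBracket mul P x y = -wittBracket mul P y x := by
  simp only [wittBracket, hcomm x (P y), hcomm (P x) y, neg_sub]

theorem map_wittBracket (hP : ∀ x y : A, P (mul x y) = mul (P x) y + mul x (P y)) (x y : A) :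
    P (wittBracket mul P x y) = wittBracket mul P (P x) y + wittBracket mul P x (P y) := by
  simp only [wittBracket, map_sub, hP]
  abel

theorem mul_left_comm_of_comm_of_assoc (hcomm : ∀ x y : A, mul x y = mul y x)
    (hassoc : ∀ x y z : A, mul (mul x y) z = mul x (mul y z)) (x y z : A) :
    mul x (mul y z) = mul y (mul x z) := by
  rw [← hassoc, hcomm x y, hassoc]

variable (hcomm : ∀ x y : A, mul x y = mul y x)
  (hassoc : ∀ x y z : A, mul (mul x y) z = mul x (mul y z))
  (hP : ∀ x y : A, P (mul x y) = mul (P x) y + mul x (P y))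
include hcomm hassoc hP

theorem wittBracket_jacobi (x y z : A) :
    wittBracket mul P x (wittBracket mul P y z) + wittBracket mul P y (wittBracket mul P z x)
      + wittBracket mul P z (wittBracket mul P x y) = 0 := by
  simp only [wittBracket, map_sub, hP, map_add]
  simp only [hcomm, mul_left_comm_of_comm_of_assoc hcomm hassoc]
  abel

theorem wittBracket_mul (x y z : A) :
    wittBracket mul P z (mul x y)
      = mul (wittBracket mul P z x) y + mul x (wittBracket mul P z y) + mul (mul x y) (P z) := by
  simp only [wittBracket, map_sub, hP, LinearMap.sub_apply, map_add]
  simp only [hassoc, hcomm, mul_left_comm_of_comm_of_assoc hcomm hassoc]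
  abel

end WittBracket

theorem witt_gives_relative_poisson_general {K A : Type*} [Field K]
    [AddCommGroup A] [Module K A]
    (mul : A →ₗ[K] A →ₗ[K] A)
    (hcomm : ∀ x y : A, mul x y = mul y x)
    (hassoc : ∀ x y z : A, mul (mul x y) z = mul x (mul y z))
    (P : A →ₗ[K] A)
    (hP : ∀ x y : A, P (mul x y) = mul (P x) y + mul x (P y))
    (br : A → A → A)
    (hbr : ∀ x y : A, br x y = mul x (P y) - mul (P x) y) :
    (∀ x y : A, br x y = - br y x) ∧
    (∀ x y z : A, br x (br y z) + br y (br z x) + br z (br x y) = 0) ∧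
    (∀ x y : A, P (br x y) = br (P x) y + br x (P y)) ∧
    (∀ x y z : A, br z (mul x y)
      = mul (br z x) y + mul x (br z y) + mul (mul x y) (P z)) := by
  obtain rfl : br = wittBracket mul P := funext₂ hbr
  exact ⟨wittBracket_anticomm hcomm, wittBracket_jacobi hcomm hassoc hP, map_wittBracket hP,
    wittBracket_mul hcomm hassoc hP⟩

/-- A commutative differential algebra (A,·,P) with the Witt type
bracket [x,y] = x·P(y) − P(x)·y is a relative Poisson algebra. -/
theorem witt_gives_relative_poisson {K A : Type*} [Field K] [CharZero K]
    [AddCommGroup A] [Module K A]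
    (mul : A →ₗ[K] A →ₗ[K] A)
    (hcomm : ∀ x y : A, mul x y = mul y x)
    (hassoc : ∀ x y z : A, mul (mul x y) z = mul x (mul y z))
    (P : A →ₗ[K] A)
    (hP : ∀ x y : A, P (mul x y) = mul (P x) y + mul x (P y))
    (br : A → A → A)
    (hbr : ∀ x y : A, br x y = mul x (P y) - mul (P x) y) :
    (∀ x y : A, br x y = - br y x) ∧
    (∀ x y z : A, br x (br y z) + br y (br z x) + br z (br x y) = 0) ∧
    (∀ x y : A, P (br x y) = br (P x) y + br x (P y)) ∧
    (∀ x y z : A, br z (mul x y)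
      = mul (br z x) y + mul x (br z y) + mul (mul x y) (P z)) :=
  witt_gives_relative_poisson_general mul hcomm hassoc P hP br hbr
end

section
/- Let (A,·,P,Q) be an admissible commutative differential algebra and define x∘y = Q(x·y) − P(x)·y. Then (A,∘) is an anti-pre-Lie algebra, i.e. x∘(y∘z) − y∘(x∘z) = [y,x]∘z and [x,y]∘z + [y,z]∘x + [z,x]∘y = 0, where [x,y] = x∘y − y∘x. -/
/-!
Since `Q (x·y)` is symmetric in `x, y`, the commutator of `∘` is `x∘y − y∘x = P(y)·x − P(x)·y`.
The cyclic identity then only involves `Q` and `P` applied to cyclic sums of the form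
`(f y·x − f x·y)·z`, which vanish by commutativity and associativity. The other identity is a
direct expansion: the admissibility condition `Q(x·y) = x·Q(y) − P(x)·y` pushes every `Q` onto
`z`, and what remains cancels by the Leibniz rule.
-/

section

variable {K A : Type*} [CommSemiring K] [AddCommGroup A] [Module K A]

structure IsAdmissibleCommDiffAlgebra (mul : A →ₗ[K] A →ₗ[K] A) (P Q : A →ₗ[K] A) : Prop where
  mul_comm : ∀ x y, mul x y = mul y x
  mul_assoc : ∀ x y z, mul (mul x y) z = mul x (mul y z)
  map_mul : ∀ x y, P (mul x y) = mul (P x) y + mul x (P y)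
  admissible : ∀ x y, mul x (Q y) - mul (P x) y - Q (mul x y) = 0

def admissibleCirc (mul : A →ₗ[K] A →ₗ[K] A) (P Q : A →ₗ[K] A) (x y : A) : A :=
  Q (mul x y) - mul (P x) y

namespace IsAdmissibleCommDiffAlgebra

variable {mul : A →ₗ[K] A →ₗ[K] A} {P Q : A →ₗ[K] A}

local infixl:70 " ∘ₐ " => admissibleCirc mul P Q

theorem mul_left_comm (h : IsAdmissibleCommDiffAlgebra mul P Q) (x y z : A) :
    mul x (mul y z) = mul y (mul x z) := by
  rw [← h.mul_assoc, h.mul_comm x y, h.mul_assoc]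

theorem Q_mul (h : IsAdmissibleCommDiffAlgebra mul P Q) (x y : A) :
    Q (mul x y) = mul x (Q y) - mul (P x) y :=
  (sub_eq_zero.mp (h.admissible x y)).symm

theorem circ_sub_circ (h : IsAdmissibleCommDiffAlgebra mul P Q) (x y : A) :
    x ∘ₐ y - y ∘ₐ x = mul (P y) x - mul (P x) y := by
  rw [admissibleCirc, admissibleCirc, h.mul_comm y x]
  abel

theorem P_mul_P_sub_mul_P (h : IsAdmissibleCommDiffAlgebra mul P Q) (x y : A) :
    P (mul (P y) x - mul (P x) y) = mul (P (P y)) x - mul (P (P x)) y := by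
  rw [map_sub, h.map_mul, h.map_mul, h.mul_comm (P y) (P x)]
  abel

theorem cyclic_sum_eq_zero (h : IsAdmissibleCommDiffAlgebra mul P Q) (f : A → A) (x y z : A) :
    mul (mul (f y) x - mul (f x) y) z + mul (mul (f z) y - mul (f y) z) x
      + mul (mul (f x) z - mul (f z) x) y = 0 := by
  simp only [map_sub, LinearMap.sub_apply, h.mul_assoc]
  simp only [h.mul_comm, h.mul_left_comm]
  abel

theorem circ_circ_sub_circ_circ (h : IsAdmissibleCommDiffAlgebra mul P Q) (x y z : A) :
    x ∘ₐ (y ∘ₐ z) - y ∘ₐ (x ∘ₐ z) = (y ∘ₐ x - x ∘ₐ y) ∘ₐ z := by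
  rw [h.circ_sub_circ]
  simp only [admissibleCirc, map_add, map_sub, LinearMap.add_apply, LinearMap.sub_apply, h.Q_mul,
    h.map_mul, h.mul_assoc]
  simp only [h.mul_comm, h.mul_left_comm]
  abel

theorem commutator_circ_cyclic (h : IsAdmissibleCommDiffAlgebra mul P Q) (x y z : A) :
    (x ∘ₐ y - y ∘ₐ x) ∘ₐ z + (y ∘ₐ z - z ∘ₐ y) ∘ₐ x + (z ∘ₐ x - x ∘ₐ z) ∘ₐ y = 0 := by
  rw [h.circ_sub_circ, h.circ_sub_circ, h.circ_sub_circ]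
  simp only [admissibleCirc, h.P_mul_P_sub_mul_P]
  have hQ := congrArg Q (h.cyclic_sum_eq_zero P x y z)
  have hPP := h.cyclic_sum_eq_zero (P ∘ P) x y z
  simp only [map_add, map_zero, Function.comp_apply] at hQ hPP
  convert congrArg₂ (· - ·) hQ hPP using 1 <;> abel

end IsAdmissibleCommDiffAlgebra

end

theorem admissible_gives_anti_pre_lie_general {K A : Type*} [Field K]
    [AddCommGroup A] [Module K A]
    (mul : A →ₗ[K] A →ₗ[K] A)
    (hcomm : ∀ x y : A, mul x y = mul y x)
    (hassoc : ∀ x y z : A, mul (mul x y) z = mul x (mul y z))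
    (P Q : A →ₗ[K] A)
    (hP : ∀ x y : A, P (mul x y) = mul (P x) y + mul x (P y))
    (hQ : ∀ x y : A, mul x (Q y) - mul (P x) y - Q (mul x y) = 0)
    (circ : A → A → A)
    (hcirc : ∀ x y : A, circ x y = Q (mul x y) - mul (P x) y) :
    (∀ x y z : A,
      circ x (circ y z) - circ y (circ x z) = circ (circ y x - circ x y) z) ∧
    (∀ x y z : A,
      circ (circ x y - circ y x) z + circ (circ y z - circ z y) x
        + circ (circ z x - circ x z) y = 0) := by
  have h : IsAdmissibleCommDiffAlgebra mul P Q := ⟨hcomm, hassoc, hP, hQ⟩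
  obtain rfl : circ = admissibleCirc mul P Q := funext₂ hcirc
  exact ⟨h.circ_circ_sub_circ_circ, h.commutator_circ_cyclic⟩

/-- x∘y = Q(x·y) − P(x)·y on an admissible commutative differential
algebra gives an anti-pre-Lie algebra. -/
theorem admissible_gives_anti_pre_lie {K A : Type*} [Field K] [CharZero K]
    [AddCommGroup A] [Module K A]
    (mul : A →ₗ[K] A →ₗ[K] A)
    (hcomm : ∀ x y : A, mul x y = mul y x)
    (hassoc : ∀ x y z : A, mul (mul x y) z = mul x (mul y z))
    (P Q : A →ₗ[K] A)
    (hP : ∀ x y : A, P (mul x y) = mul (P x) y + mul x (P y))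
    (hQ : ∀ x y : A, mul x (Q y) - mul (P x) y - Q (mul x y) = 0)
    (circ : A → A → A)
    (hcirc : ∀ x y : A, circ x y = Q (mul x y) - mul (P x) y) :
    (∀ x y z : A,
      circ x (circ y z) - circ y (circ x z) = circ (circ y x - circ x y) z) ∧
    (∀ x y z : A,
      circ (circ x y - circ y x) z + circ (circ y z - circ z y) x
        + circ (circ z x - circ x z) y = 0) :=
  admissible_gives_anti_pre_lie_general mul hcomm hassoc P Q hP hQ circ hcirc
end

section
/- Let (A,[-,-]) be a Lie algebra with a nondegenerate commutative 2-cocycle B, and define ∘ by B(x∘y, z) = B(y, [x,z]). Then (A,∘) is an anti-pre-Lie algebra whose sub-adjacent bracket x∘y − y∘x coincides with [x,y]. -/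
/-!
The product is `x ∘ y = (ad x)ᵀ y`, the `B`-transpose of `ad x = [x, -]`. Transposing the
Jacobi identity `ad [y, x] = ad y ∘ ad x - ad x ∘ ad y` gives the left identity of an anti-pre-Lie
algebra, and the cocycle condition (with the symmetry of `B`) says that `x ∘ y - y ∘ x = [x, y]`.
For the cyclic identity, note that in any algebra satisfying the left identity the Jacobiator of
the commutator is twice the cyclic sum `[x, y] ∘ z + [y, z] ∘ x + [z, x] ∘ y`; here the
commutator is the Lie bracket, so this cyclic sum vanishes once `2` is invertible.
-/

theorem two_smul_cyclic_eq_jacobiator_of_left_comm {R M : Type*} [CommRing R]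
    [AddCommGroup M] [Module R M] (μ : M →ₗ[R] M →ₗ[R] M)
    (hleft : ∀ x y z, μ x (μ y z) - μ y (μ x z) = μ (μ y x - μ x y) z) (x y z : M) :
    (2 : R) • (μ (μ x y - μ y x) z + μ (μ y z - μ z y) x + μ (μ z x - μ x z) y) =
      (μ (μ x y - μ y x) z - μ z (μ x y - μ y x))
        + (μ (μ y z - μ z y) x - μ x (μ y z - μ z y))
        + (μ (μ z x - μ x z) y - μ y (μ z x - μ x z)) := by
  have h₁ := hleft x y z
  have h₂ := hleft y z x
  have h₃ := hleft z x y
  simp only [map_sub, LinearMap.sub_apply] at h₁ h₂ h₃ ⊢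
  linear_combination (norm := module) h₁ + h₂ + h₃

section CommutativeCocycle

variable {K A : Type*} [CommRing K] [AddCommGroup A] [Module K A]

theorem bracket_bracket_eq_sub {bracket : A →ₗ[K] A →ₗ[K] A}
    (hanti : ∀ x y : A, bracket x y = - bracket y x)
    (hjacobi : ∀ x y z : A,
      bracket x (bracket y z) + bracket y (bracket z x) + bracket z (bracket x y) = 0)
    (x y w : A) :
    bracket (bracket x y) w = bracket x (bracket y w) - bracket y (bracket x w) := by
  have h := hjacobi x y w
  rw [hanti w x, hanti w (bracket x y), map_neg] at h
  linear_combination (norm := module) -h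

theorem apply_bracket_eq_sub {bracket : A →ₗ[K] A →ₗ[K] A} {B : A →ₗ[K] A →ₗ[K] K}
    (hanti : ∀ x y : A, bracket x y = - bracket y x)
    (hsymm : ∀ x y : A, B x y = B y x)
    (hcoc : ∀ x y z : A, B (bracket x y) z + B (bracket y z) x + B (bracket z x) y = 0)
    (a b c : A) :
    B (bracket a b) c = B b (bracket a c) - B a (bracket b c) := by
  have h := hcoc a b c
  rw [hsymm (bracket b c), hsymm (bracket c a), hanti c a, map_neg] at h
  linear_combination h

theorem eq_of_forall_apply_eq {B : A →ₗ[K] A →ₗ[K] K} (hnondeg : B.SeparatingLeft)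
    {u v : A} (h : ∀ w, B u w = B v w) : u = v :=
  LinearMap.ker_eq_bot.mp (LinearMap.separatingLeft_iff_ker_eq_bot.mp hnondeg)
    (LinearMap.ext h)

variable {bracket : A →ₗ[K] A →ₗ[K] A} {B : A →ₗ[K] A →ₗ[K] K} {circ : A → A → A}

theorem exists_bilinear_eq_circ (hnondeg : B.SeparatingLeft)
    (hcirc : ∀ x y z : A, B (circ x y) z = B y (bracket x z)) :
    ∃ μ : A →ₗ[K] A →ₗ[K] A, ∀ x y, μ x y = circ x y :=
  ⟨LinearMap.mk₂ K circ
    (fun _ _ _ => eq_of_forall_apply_eq hnondeg fun _ => by simp [hcirc])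
    (fun _ _ _ => eq_of_forall_apply_eq hnondeg fun _ => by simp [hcirc])
    (fun _ _ _ => eq_of_forall_apply_eq hnondeg fun _ => by simp [hcirc])
    (fun _ _ _ => eq_of_forall_apply_eq hnondeg fun _ => by simp [hcirc]),
    fun _ _ => rfl⟩

theorem circ_sub_circ_eq_bracket
    (hanti : ∀ x y : A, bracket x y = - bracket y x)
    (hsymm : ∀ x y : A, B x y = B y x)
    (hnondeg : B.SeparatingLeft)
    (hcoc : ∀ x y z : A, B (bracket x y) z + B (bracket y z) x + B (bracket z x) y = 0)
    (hcirc : ∀ x y z : A, B (circ x y) z = B y (bracket x z)) (x y : A) :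
    circ x y - circ y x = bracket x y :=
  eq_of_forall_apply_eq hnondeg fun w => by
    rw [map_sub, LinearMap.sub_apply, hcirc, hcirc, apply_bracket_eq_sub hanti hsymm hcoc]

theorem circ_left_comm
    (hanti : ∀ x y : A, bracket x y = - bracket y x)
    (hjacobi : ∀ x y z : A,
      bracket x (bracket y z) + bracket y (bracket z x) + bracket z (bracket x y) = 0)
    (hsymm : ∀ x y : A, B x y = B y x)
    (hnondeg : B.SeparatingLeft)
    (hcoc : ∀ x y z : A, B (bracket x y) z + B (bracket y z) x + B (bracket z x) y = 0)
    (hcirc : ∀ x y z : A, B (circ x y) z = B y (bracket x z)) (x y z : A) :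
    circ x (circ y z) - circ y (circ x z) = circ (circ y x - circ x y) z :=
  eq_of_forall_apply_eq hnondeg fun w => by
    rw [circ_sub_circ_eq_bracket hanti hsymm hnondeg hcoc hcirc, map_sub, LinearMap.sub_apply,
      hcirc, hcirc, hcirc, hcirc, hcirc, bracket_bracket_eq_sub hanti hjacobi, map_sub]

end CommutativeCocycle

/-- A nondegenerate commutative 2-cocycle B on a Lie algebra induces a
compatible anti-pre-Lie structure via B(x∘y,z) = B(y,[x,z]). -/
theorem two_cocycle_gives_anti_pre_lie {K A : Type*} [Field K] [CharZero K]
    [AddCommGroup A] [Module K A]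
    (bracket : A →ₗ[K] A →ₗ[K] A)
    (hanti : ∀ x y : A, bracket x y = - bracket y x)
    (hjacobi : ∀ x y z : A,
      bracket x (bracket y z) + bracket y (bracket z x) + bracket z (bracket x y) = 0)
    (B : A →ₗ[K] A →ₗ[K] K)
    (hsymm : ∀ x y : A, B x y = B y x)
    (hnondeg : ∀ x : A, (∀ y : A, B x y = 0) → x = 0)
    (hcoc : ∀ x y z : A,
      B (bracket x y) z + B (bracket y z) x + B (bracket z x) y = 0)
    (circ : A → A → A)
    (hcirc : ∀ x y z : A, B (circ x y) z = B y (bracket x z)) :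
    (∀ x y z : A,
      circ x (circ y z) - circ y (circ x z) = circ (circ y x - circ x y) z) ∧
    (∀ x y z : A,
      circ (circ x y - circ y x) z + circ (circ y z - circ z y) x
        + circ (circ z x - circ x z) y = 0) ∧
    (∀ x y : A, circ x y - circ y x = bracket x y) := by
  have hleft := circ_left_comm hanti hjacobi hsymm hnondeg hcoc hcirc
  have hcomm := circ_sub_circ_eq_bracket hanti hsymm hnondeg hcoc hcirc
  refine ⟨hleft, fun x y z => ?_, hcomm⟩
  obtain ⟨μ, hμ⟩ := exists_bilinear_eq_circ hnondeg hcirc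
  have hcyclic := two_smul_cyclic_eq_jacobiator_of_left_comm μ
    (by simpa only [hμ] using hleft) x y z
  simp only [hμ, hcomm] at hcyclic
  rw [hcomm, hcomm, hcomm]
  have htwice :
      (2 : K) • (circ (bracket x y) z + circ (bracket y z) x + circ (bracket z x) y) = 0 := by
    rw [hcyclic, hanti (bracket x y), hanti (bracket y z), hanti (bracket z x)]
    linear_combination (norm := module) -hjacobi x y z
  exact (smul_eq_zero.mp htwice).resolve_left two_ne_zero
end

section
/- Let (A,·,[-,-],P) be a relative Poisson algebra with a nondegenerate symmetric bilinear form B that is invariant on (A,·) and a commutative 2-cocycle on (A,[-,-]). Let ∘ be defined by B(x∘y,z) = B(y,[x,z]) and let P̂ be the adjoint of P with respect to B, i.e. B(P̂(x),y) = B(x,P(y)). Then the identity x∘P̂(z) − P(x)∘z − P̂(x∘z) = 0 holds for all x,z ∈ A. -/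
theorem adjoint_identity_for_circ_general {K A : Type*} [Field K]
    [AddCommGroup A] [Module K A]
    (bracket : A →ₗ[K] A →ₗ[K] A)
    (P : A →ₗ[K] A)
    (hPbr : ∀ x y : A, P (bracket x y) = bracket (P x) y + bracket x (P y))
    (B : A →ₗ[K] A →ₗ[K] K)
    (hnondeg : ∀ x : A, (∀ y : A, B x y = 0) → x = 0)
    (circ : A → A → A)
    (hcirc : ∀ x y z : A, B (circ x y) z = B y (bracket x z))
    (Phat : A → A)
    (hPhat : ∀ x y : A, B (Phat x) y = B x (P y)) :
    ∀ x z : A, circ x (Phat z) - circ (P x) z - Phat (circ x z) = 0 := by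
  intro x z
  refine hnondeg _ fun y => ?_
  -- Pairing with `y` reduces the identity to `P` being a derivation of the bracket.
  have hderiv : B (circ x (Phat z)) y = B (circ (P x) z) y + B (Phat (circ x z)) y := by
    rw [hcirc, hPhat, hPbr, map_add, hcirc, hPhat, hcirc]
  rw [map_sub, map_sub, LinearMap.sub_apply, LinearMap.sub_apply, hderiv]
  ring

/-- For a relative Poisson algebra with an invariant-c2c form B,
the induced ∘ and the B-adjoint P̂ of P satisfy x∘P̂(z) − P(x)∘z − P̂(x∘z) = 0. -/
theorem adjoint_identity_for_circ {K A : Type*} [Field K] [CharZero K]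
    [AddCommGroup A] [Module K A]
    (mul : A →ₗ[K] A →ₗ[K] A)
    (hcomm : ∀ x y : A, mul x y = mul y x)
    (hassoc : ∀ x y z : A, mul (mul x y) z = mul x (mul y z))
    (bracket : A →ₗ[K] A →ₗ[K] A)
    (hanti : ∀ x y : A, bracket x y = - bracket y x)
    (hjacobi : ∀ x y z : A,
      bracket x (bracket y z) + bracket y (bracket z x) + bracket z (bracket x y) = 0)
    (P : A →ₗ[K] A)
    (hPmul : ∀ x y : A, P (mul x y) = mul (P x) y + mul x (P y))
    (hPbr : ∀ x y : A, P (bracket x y) = bracket (P x) y + bracket x (P y))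
    (hLeib : ∀ x y z : A, bracket z (mul x y)
      = mul (bracket z x) y + mul x (bracket z y) + mul (mul x y) (P z))
    (B : A →ₗ[K] A →ₗ[K] K)
    (hsymm : ∀ x y : A, B x y = B y x)
    (hnondeg : ∀ x : A, (∀ y : A, B x y = 0) → x = 0)
    (hinv : ∀ x y z : A, B (mul x y) z = B x (mul y z))
    (hcoc : ∀ x y z : A,
      B (bracket x y) z + B (bracket y z) x + B (bracket z x) y = 0)
    (circ : A → A → A)
    (hcirc : ∀ x y z : A, B (circ x y) z = B y (bracket x z))
    (Phat : A → A)
    (hPhat : ∀ x y : A, B (Phat x) y = B x (P y)) :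
    ∀ x z : A, circ x (Phat z) - circ (P x) z - Phat (circ x z) = 0 :=
  adjoint_identity_for_circ_general bracket P hPbr B hnondeg circ hcirc Phat hPhat
end

section
/- Let (A,·,∘,P,Q) be a relative PCA algebra such that (A,·) has a unit 1 and (A,·,[-,-]) is a Jacobi algebra, where [x,y] = x∘y − y∘x. Then 1∘x = Q(x) for all x, and [x,y] = x·P(y) − y·P(x) for all x,y, i.e. (A,[-,-]) is the Witt type Lie algebra of (A,·,P) where P = [1,-]. -/
/-!
Specialising the PCA identities at the unit does all the work. The fourth gives `1 ∘ x = Q x`;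
comparing the relative Poisson and Jacobi Leibniz rules on `1 · 1` gives `P = [1, -]`; the first
gives `Q x = x · Q 1 - P x`; and the third at `z = 1` expresses every left multiplication
`y ∘ x` through `[x, y]` and `f y := y ∘ 1`. Substituting this into `[x, y] = x ∘ y - y ∘ x`
yields `3 [x, y] = y · f x - x · f y - y · P x + x · P y`. At `y = 1` this determines
`f x = x · Q 1 - 2 P x`, and feeding `f` back in leaves `3 [x, y] = 3 (x · P y - y · P x)`.
-/

section RelativePCA

variable {K A : Type*} [CommRing K] [AddCommGroup A] [Module K A]
  {mul circ : A →ₗ[K] A →ₗ[K] A} {br : A → A → A} {P Q : A →ₗ[K] A} {one : A}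

theorem circ_one_left_eq (hone : ∀ x, mul one x = x)
    (hpca4 : ∀ x y z : A, circ (mul x y) z - circ y (mul x z) - circ x (mul y z)
      + Q (mul (mul x y) z) = 0) (x : A) :
    circ one x = Q x := by
  have h := hpca4 one one x
  simp only [hone] at h
  rwa [sub_self, zero_sub, neg_add_eq_zero] at h

theorem eq_br_one_of_leibniz (hone : ∀ x, mul one x = x)
    (hLeib : ∀ x y z : A, br z (mul x y) = mul (br z x) y + mul x (br z y) + mul (mul x y) (P z))
    (hJacobi : ∀ x y z : A, br z (mul x y)
      = mul (br z x) y + mul x (br z y) + mul (mul x y) (br one z)) (x : A) :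
    P x = br one x := by
  have hP := hLeib one one x
  have hbr := hJacobi one one x
  simp only [hone] at hP hbr
  exact add_left_cancel (hP.symm.trans hbr)

theorem Q_eq_mul_Q_one_sub (hmul_one : ∀ x, mul x one = x)
    (hpca1 : ∀ x y : A, mul x (Q y) - mul (P x) y - Q (mul x y) = 0) (x : A) :
    Q x = mul x (Q one) - P x := by
  have h := hpca1 x one
  rw [hmul_one, hmul_one] at h
  linear_combination (norm := module) -h

theorem circ_eq_br_add_mul (hmul_one : ∀ x, mul x one = x)
    (hpca3 : ∀ x y z : A, mul x (circ y z) - circ y (mul x z) + mul (br x y) z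
      - mul (mul x (P y)) z = 0) (x y : A) :
    circ y x = br x y + mul x (circ y one) - mul x (P y) := by
  have h := hpca3 x y one
  rw [hmul_one, hmul_one, hmul_one] at h
  linear_combination (norm := module) -h

theorem three_smul_br_eq (hmul_one : ∀ x, mul x one = x)
    (hbr : ∀ x y : A, br x y = circ x y - circ y x)
    (hpca3 : ∀ x y z : A, mul x (circ y z) - circ y (mul x z) + mul (br x y) z
      - mul (mul x (P y)) z = 0) (x y : A) :
    (3 : K) • br x y
      = mul y (circ x one) - mul x (circ y one) - mul y (P x) + mul x (P y) := by
  have hanti : br y x = -br x y := by rw [hbr, hbr, neg_sub]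
  have h := hbr x y
  rw [circ_eq_br_add_mul hmul_one hpca3 y x, circ_eq_br_add_mul hmul_one hpca3 x y, hanti] at h
  linear_combination (norm := module) h

end RelativePCA

section CharZero

variable {K A : Type*} [Field K] [CharZero K] [AddCommGroup A] [Module K A]
  {mul circ : A →ₗ[K] A →ₗ[K] A} {br : A → A → A} {P Q : A →ₗ[K] A} {one : A}

theorem circ_one_right_eq (hone : ∀ x, mul one x = x) (hmul_one : ∀ x, mul x one = x)
    (hbr : ∀ x y : A, br x y = circ x y - circ y x)
    (hP : ∀ x, P x = br one x) (hcirc_one : ∀ x, circ one x = Q x)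
    (hpca1 : ∀ x y : A, mul x (Q y) - mul (P x) y - Q (mul x y) = 0)
    (hpca3 : ∀ x y z : A, mul x (circ y z) - circ y (mul x z) + mul (br x y) z
      - mul (mul x (P y)) z = 0) (x : A) :
    circ x one = mul x (Q one) - (2 : K) • P x := by
  have hP_one : P one = 0 := by rw [hP, hbr, sub_self]
  have h := three_smul_br_eq (K := K) hmul_one hbr hpca3 x one
  rw [hone, hone, hP_one, map_zero, hcirc_one, hbr, hcirc_one,
    Q_eq_mul_Q_one_sub hmul_one hpca1 x] at h
  apply smul_right_injective A (two_ne_zero : (2 : K) ≠ 0)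
  linear_combination (norm := module) h

theorem br_eq_witt (hcomm : ∀ x y : A, mul x y = mul y x)
    (hassoc : ∀ x y z : A, mul (mul x y) z = mul x (mul y z))
    (hone : ∀ x, mul one x = x) (hbr : ∀ x y : A, br x y = circ x y - circ y x)
    (hP : ∀ x, P x = br one x) (hcirc_one : ∀ x, circ one x = Q x)
    (hpca1 : ∀ x y : A, mul x (Q y) - mul (P x) y - Q (mul x y) = 0)
    (hpca3 : ∀ x y z : A, mul x (circ y z) - circ y (mul x z) + mul (br x y) z
      - mul (mul x (P y)) z = 0) (x y : A) :
    br x y = mul x (P y) - mul y (P x) := by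
  have hmul_one : ∀ x, mul x one = x := fun x => (hcomm x one).trans (hone x)
  have h := three_smul_br_eq (K := K) hmul_one hbr hpca3 x y
  have hQ_one_comm : mul y (mul x (Q one)) = mul x (mul y (Q one)) := by
    rw [← hassoc, hcomm y x, hassoc]
  simp only [circ_one_right_eq hone hmul_one hbr hP hcirc_one hpca1 hpca3, map_sub, map_smul,
    hQ_one_comm] at h
  apply smul_right_injective A (three_ne_zero : (3 : K) ≠ 0)
  linear_combination (norm := module) h

end CharZero

theorem unital_relative_PCA_is_witt_general {K A : Type*} [Field K] [CharZero K]
    [AddCommGroup A] [Module K A]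
    (mul : A →ₗ[K] A →ₗ[K] A)
    (hcomm : ∀ x y : A, mul x y = mul y x)
    (hassoc : ∀ x y z : A, mul (mul x y) z = mul x (mul y z))
    (circ : A →ₗ[K] A →ₗ[K] A)
    (br : A → A → A)
    (hbr : ∀ x y : A, br x y = circ x y - circ y x)
    (P Q : A →ₗ[K] A)
    (hLeib : ∀ x y z : A, br z (mul x y)
      = mul (br z x) y + mul x (br z y) + mul (mul x y) (P z))
    (hpca1 : ∀ x y : A, mul x (Q y) - mul (P x) y - Q (mul x y) = 0)
    (hpca3 : ∀ x y z : A,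
      mul x (circ y z) - circ y (mul x z) + mul (br x y) z
        - mul (mul x (P y)) z = 0)
    (hpca4 : ∀ x y z : A,
      circ (mul x y) z - circ y (mul x z) - circ x (mul y z)
        + Q (mul (mul x y) z) = 0)
    (one : A)
    (hone : ∀ x : A, mul one x = x)
    (hJacobi : ∀ x y z : A, br z (mul x y)
      = mul (br z x) y + mul x (br z y) + mul (mul x y) (br one z)) :
    (∀ x : A, circ one x = Q x) ∧
    (∀ x : A, P x = br one x) ∧
    (∀ x y : A, br x y = mul x (P y) - mul y (P x)) := by
  have hcirc_one := circ_one_left_eq hone hpca4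
  have hP := eq_br_one_of_leibniz hone hLeib hJacobi
  exact ⟨hcirc_one, hP, br_eq_witt hcomm hassoc hone hbr hP hcirc_one hpca1 hpca3⟩

/-- In a unital relative PCA algebra whose underlying structure is a
Jacobi algebra, 1∘x = Q(x), P = [1,-], and the bracket is the Witt type bracket of
(A,·,P). -/
theorem unital_relative_PCA_is_witt {K A : Type*} [Field K] [CharZero K]
    [AddCommGroup A] [Module K A]
    (mul : A →ₗ[K] A →ₗ[K] A)
    (hcomm : ∀ x y : A, mul x y = mul y x)
    (hassoc : ∀ x y z : A, mul (mul x y) z = mul x (mul y z))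
    (circ : A →ₗ[K] A →ₗ[K] A)
    (br : A → A → A)
    (hbr : ∀ x y : A, br x y = circ x y - circ y x)
    (hapl1 : ∀ x y z : A,
      circ x (circ y z) - circ y (circ x z) = circ (br y x) z)
    (hapl2 : ∀ x y z : A,
      circ (br x y) z + circ (br y z) x + circ (br z x) y = 0)
    (P Q : A →ₗ[K] A)
    (hPmul : ∀ x y : A, P (mul x y) = mul (P x) y + mul x (P y))
    (hPbr : ∀ x y : A, P (br x y) = br (P x) y + br x (P y))
    (hLeib : ∀ x y z : A, br z (mul x y)
      = mul (br z x) y + mul x (br z y) + mul (mul x y) (P z))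
    (hpca1 : ∀ x y : A, mul x (Q y) - mul (P x) y - Q (mul x y) = 0)
    (hpca2 : ∀ x y : A, circ x (Q y) - circ (P x) y - Q (circ x y) = 0)
    (hpca3 : ∀ x y z : A,
      mul x (circ y z) - circ y (mul x z) + mul (br x y) z
        - mul (mul x (P y)) z = 0)
    (hpca4 : ∀ x y z : A,
      circ (mul x y) z - circ y (mul x z) - circ x (mul y z)
        + Q (mul (mul x y) z) = 0)
    (one : A)
    (hone : ∀ x : A, mul one x = x)
    (hJacobi : ∀ x y z : A, br z (mul x y)
      = mul (br z x) y + mul x (br z y) + mul (mul x y) (br one z)) :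
    (∀ x : A, circ one x = Q x) ∧
    (∀ x : A, P x = br one x) ∧
    (∀ x y : A, br x y = mul x (P y) - mul y (P x)) :=
  unital_relative_PCA_is_witt_general mul hcomm hassoc circ br hbr P Q hLeib hpca1 hpca3 hpca4 one
    hone hJacobi
end

section
/- In any relative PCA algebra (A,·,∘,P,Q), the identity (x·y)∘z + z∘(x·y) = y∘(x·z) + (x·z)∘y holds for all x,y,z ∈ A. -/
/-!
The last defining identity says `(x·y)∘z − y∘(x·z) = x∘(y·z) − Q(x·y·z)`, whose right-hand side is symmetric
in `y` and `z` because `·` is commutative and associative. Hence so is the left-hand side, and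
swapping `y` and `z` there is exactly the exchange identity.
-/

section

variable {A : Type*} [AddCommGroup A] {mul circ : A → A → A} {Q : A → A}

theorem circ_mul_sub_circ_mul_comm (hcomm : ∀ x y : A, mul x y = mul y x)
    (hassoc : ∀ x y z : A, mul (mul x y) z = mul x (mul y z))
    (hpca4 : ∀ x y z : A,
      circ (mul x y) z - circ y (mul x z) - circ x (mul y z) + Q (mul (mul x y) z) = 0)
    (x y z : A) :
    circ (mul x y) z - circ y (mul x z) = circ (mul x z) y - circ z (mul x y) := by
  have hpca4' : ∀ y z, circ (mul x y) z - circ y (mul x z)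
      = circ x (mul y z) - Q (mul x (mul y z)) := fun y z => by
    rw [← sub_eq_zero, ← hassoc, ← hpca4 x y z]
    abel
  rw [hpca4', hpca4', hcomm y z]

end

theorem relative_PCA_exchange_identity_general {K A : Type*} [Field K]
    [AddCommGroup A] [Module K A]
    (mul : A →ₗ[K] A →ₗ[K] A)
    (hcomm : ∀ x y : A, mul x y = mul y x)
    (hassoc : ∀ x y z : A, mul (mul x y) z = mul x (mul y z))
    (circ : A →ₗ[K] A →ₗ[K] A)
    (Q : A →ₗ[K] A)
    (hpca4 : ∀ x y z : A,
      circ (mul x y) z - circ y (mul x z) - circ x (mul y z)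
        + Q (mul (mul x y) z) = 0)
    :
    ∀ x y z : A, circ (mul x y) z + circ z (mul x y)
      = circ y (mul x z) + circ (mul x z) y := fun x y z =>
  (sub_eq_sub_iff_add_eq_add.mp
    (circ_mul_sub_circ_mul_comm (circ := fun a b => circ a b) hcomm hassoc hpca4 x y z)).trans
    (add_comm _ _)

/-- In any relative PCA algebra,
(x·y)∘z + z∘(x·y) = y∘(x·z) + (x·z)∘y. -/
theorem relative_PCA_exchange_identity {K A : Type*} [Field K] [CharZero K]
    [AddCommGroup A] [Module K A]
    (mul : A →ₗ[K] A →ₗ[K] A)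
    (hcomm : ∀ x y : A, mul x y = mul y x)
    (hassoc : ∀ x y z : A, mul (mul x y) z = mul x (mul y z))
    (circ : A →ₗ[K] A →ₗ[K] A)
    (br : A → A → A)
    (hbr : ∀ x y : A, br x y = circ x y - circ y x)
    (hapl1 : ∀ x y z : A,
      circ x (circ y z) - circ y (circ x z) = circ (br y x) z)
    (hapl2 : ∀ x y z : A,
      circ (br x y) z + circ (br y z) x + circ (br z x) y = 0)
    (P Q : A →ₗ[K] A)
    (hPmul : ∀ x y : A, P (mul x y) = mul (P x) y + mul x (P y))
    (hPbr : ∀ x y : A, P (br x y) = br (P x) y + br x (P y))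
    (hLeib : ∀ x y z : A, br z (mul x y)
      = mul (br z x) y + mul x (br z y) + mul (mul x y) (P z))
    (hpca1 : ∀ x y : A, mul x (Q y) - mul (P x) y - Q (mul x y) = 0)
    (hpca2 : ∀ x y : A, circ x (Q y) - circ (P x) y - Q (circ x y) = 0)
    (hpca3 : ∀ x y z : A,
      mul x (circ y z) - circ y (mul x z) + mul (br x y) z
        - mul (mul x (P y)) z = 0)
    (hpca4 : ∀ x y z : A,
      circ (mul x y) z - circ y (mul x z) - circ x (mul y z)
        + Q (mul (mul x y) z) = 0)
    :
    ∀ x y z : A, circ (mul x y) z + circ z (mul x y)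
      = circ y (mul x z) + circ (mul x z) y :=
  relative_PCA_exchange_identity_general mul hcomm hassoc circ Q hpca4
end

section
/- In any relative PCA algebra (A,·,∘,P,Q), the identity (2Q−P)(x·y·z) = (x·y)∘z + z∘(x·y) holds for all x,y,z ∈ A. -/
/-! With `s = (x·y)·z`, the relative Leibniz rule summed cyclically gives
`P s = [x, y·z] + [y, z·x] + [z, x·y]`, the bracket terms cancelling in pairs by antisymmetry.
Adding the last PCA identity at `(z, x, y)` and at `(y, z, x)` gives
`2 Q s = (x·y)∘z + z∘(x·y) + ([x, y·z] + [y, z·x] + [z, x·y])`, and subtracting yields the claim. -/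

section

variable {R A : Type*} [CommRing R] [AddCommGroup A] [Module R A]

theorem apply_mul_mul_eq_bracket_cyclic_sum (mul : A →ₗ[R] A →ₗ[R] A)
    (hcomm : ∀ x y : A, mul x y = mul y x)
    (hassoc : ∀ x y z : A, mul (mul x y) z = mul x (mul y z))
    (br : A → A → A) (hbr_antisymm : ∀ x y : A, br x y = -br y x)
    (P : A →ₗ[R] A) (hPmul : ∀ x y : A, P (mul x y) = mul (P x) y + mul x (P y))
    (hLeib : ∀ x y z : A, br z (mul x y)
      = mul (br z x) y + mul x (br z y) + mul (mul x y) (P z))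
    (x y z : A) :
    P (mul (mul x y) z) = br x (mul y z) + br y (mul z x) + br z (mul x y) := by
  have hcancel (a b c : A) : mul (br a b) c + mul c (br b a) = 0 := by
    rw [hcomm c, hbr_antisymm b a, map_neg, LinearMap.neg_apply, add_neg_cancel]
  have hx : mul (mul y z) (P x) = mul (mul (P x) y) z := by
    rw [hcomm, hassoc]
  have hy : mul (mul z x) (P y) = mul (mul x (P y)) z := by
    rw [hcomm z, hassoc, hassoc, hcomm z]
  have hP : P (mul (mul x y) z)
      = mul (mul (P x) y) z + mul (mul x (P y)) z + mul (mul x y) (P z) := by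
    rw [hPmul, hPmul, map_add, LinearMap.add_apply]
  rw [hP, hLeib x y z, hLeib y z x, hLeib z x y, hx, hy]
  linear_combination (norm := module) -(hcancel z x y + hcancel x y z + hcancel y z x)

theorem two_smul_apply_mul_mul_eq_circ_add_bracket_cyclic_sum (mul circ : A →ₗ[R] A →ₗ[R] A)
    (hcomm : ∀ x y : A, mul x y = mul y x)
    (hassoc : ∀ x y z : A, mul (mul x y) z = mul x (mul y z))
    (br : A → A → A) (hbr : ∀ x y : A, br x y = circ x y - circ y x) (Q : A →ₗ[R] A)
    (hpca4 : ∀ x y z : A,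
      circ (mul x y) z - circ y (mul x z) - circ x (mul y z) + Q (mul (mul x y) z) = 0)
    (x y z : A) :
    2 • Q (mul (mul x y) z) = circ (mul x y) z + circ z (mul x y)
      + (br x (mul y z) + br y (mul z x) + br z (mul x y)) := by
  have hzx : mul (mul z x) y = mul (mul x y) z := by
    rw [hcomm z, hassoc, hassoc, hcomm z]
  have hyz : mul (mul y z) x = mul (mul x y) z := by
    rw [hcomm, hassoc]
  have hzxy := hpca4 z x y
  have hyzx := hpca4 y z x
  rw [hcomm z y, hzx] at hzxy
  rw [hcomm y x, hyz] at hyzx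
  simp only [hbr]
  linear_combination (norm := module) hzxy + hyzx

end

theorem relative_PCA_2Q_sub_P_identity_general {K A : Type*} [Field K]
    [AddCommGroup A] [Module K A]
    (mul : A →ₗ[K] A →ₗ[K] A)
    (hcomm : ∀ x y : A, mul x y = mul y x)
    (hassoc : ∀ x y z : A, mul (mul x y) z = mul x (mul y z))
    (circ : A →ₗ[K] A →ₗ[K] A)
    (br : A → A → A)
    (hbr : ∀ x y : A, br x y = circ x y - circ y x)
    (P Q : A →ₗ[K] A)
    (hPmul : ∀ x y : A, P (mul x y) = mul (P x) y + mul x (P y))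
    (hLeib : ∀ x y z : A, br z (mul x y)
      = mul (br z x) y + mul x (br z y) + mul (mul x y) (P z))
    (hpca4 : ∀ x y z : A,
      circ (mul x y) z - circ y (mul x z) - circ x (mul y z)
        + Q (mul (mul x y) z) = 0)
    :
    ∀ x y z : A, 2 • Q (mul (mul x y) z) - P (mul (mul x y) z)
      = circ (mul x y) z + circ z (mul x y) := by
  intro x y z
  have hbr_antisymm (a b : A) : br a b = -br b a := by rw [hbr, hbr, neg_sub]
  rw [two_smul_apply_mul_mul_eq_circ_add_bracket_cyclic_sum mul circ hcomm hassoc br hbr Q hpca4,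
    apply_mul_mul_eq_bracket_cyclic_sum mul hcomm hassoc br hbr_antisymm P hPmul hLeib,
    add_sub_cancel_right]

/-- In any relative PCA algebra,
(2Q−P)(x·y·z) = (x·y)∘z + z∘(x·y). -/
theorem relative_PCA_2Q_sub_P_identity {K A : Type*} [Field K] [CharZero K]
    [AddCommGroup A] [Module K A]
    (mul : A →ₗ[K] A →ₗ[K] A)
    (hcomm : ∀ x y : A, mul x y = mul y x)
    (hassoc : ∀ x y z : A, mul (mul x y) z = mul x (mul y z))
    (circ : A →ₗ[K] A →ₗ[K] A)
    (br : A → A → A)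
    (hbr : ∀ x y : A, br x y = circ x y - circ y x)
    (hapl1 : ∀ x y z : A,
      circ x (circ y z) - circ y (circ x z) = circ (br y x) z)
    (hapl2 : ∀ x y z : A,
      circ (br x y) z + circ (br y z) x + circ (br z x) y = 0)
    (P Q : A →ₗ[K] A)
    (hPmul : ∀ x y : A, P (mul x y) = mul (P x) y + mul x (P y))
    (hPbr : ∀ x y : A, P (br x y) = br (P x) y + br x (P y))
    (hLeib : ∀ x y z : A, br z (mul x y)
      = mul (br z x) y + mul x (br z y) + mul (mul x y) (P z))
    (hpca1 : ∀ x y : A, mul x (Q y) - mul (P x) y - Q (mul x y) = 0)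
    (hpca2 : ∀ x y : A, circ x (Q y) - circ (P x) y - Q (circ x y) = 0)
    (hpca3 : ∀ x y z : A,
      mul x (circ y z) - circ y (mul x z) + mul (br x y) z
        - mul (mul x (P y)) z = 0)
    (hpca4 : ∀ x y z : A,
      circ (mul x y) z - circ y (mul x z) - circ x (mul y z)
        + Q (mul (mul x y) z) = 0)
    :
    ∀ x y z : A, 2 • Q (mul (mul x y) z) - P (mul (mul x y) z)
      = circ (mul x y) z + circ z (mul x y) :=
  relative_PCA_2Q_sub_P_identity_general mul hcomm hassoc circ br hbr P Q hPmul hLeib hpca4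
end

section
/- In any relative PCA algebra (A,·,∘,P,Q), the identity 2·x·P(y)·z = 2[x,y]·z + x·(z∘y) − (x·z)∘y holds for all x,y,z ∈ A, where [x,y] = x∘y − y∘x. -/
theorem relative_PCA_two_xPy_z_identity_general {K A : Type*} [Field K]
    [AddCommGroup A] [Module K A]
    (mul : A →ₗ[K] A →ₗ[K] A)
    (hcomm : ∀ x y : A, mul x y = mul y x)
    (hassoc : ∀ x y z : A, mul (mul x y) z = mul x (mul y z))
    (circ : A →ₗ[K] A →ₗ[K] A)
    (br : A → A → A)
    (hbr : ∀ x y : A, br x y = circ x y - circ y x)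
    (P : A →ₗ[K] A)
    (hLeib : ∀ x y z : A, br z (mul x y)
      = mul (br z x) y + mul x (br z y) + mul (mul x y) (P z))
    (hpca3 : ∀ x y z : A,
      mul x (circ y z) - circ y (mul x z) + mul (br x y) z
        - mul (mul x (P y)) z = 0)
    :
    ∀ x y z : A, 2 • mul (mul x (P y)) z
      = 2 • mul (br x y) z + mul x (circ z y) - circ (mul x z) y := by
  intro x y z
  -- Adding the mixed identity at `(x, y, z)` to the Leibniz rule for `[y, x·z]` cancels
  -- `y∘(x·z)` and `x·(y∘z)`; what is left is the claim once `x·z·P(y) = x·P(y)·z`.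
  have hmixed := hpca3 x y z
  have hLeib_y := hLeib x z y
  have hswap : mul (mul x (P y)) z = mul (mul x z) (P y) := by
    rw [hassoc, hcomm (P y) z, ← hassoc]
  simp only [hbr, map_sub, LinearMap.sub_apply] at hmixed hLeib_y ⊢
  linear_combination (norm := module) -hmixed - hLeib_y + hswap

/-- In any relative PCA algebra,
2·x·P(y)·z = 2[x,y]·z + x·(z∘y) − (x·z)∘y. -/
theorem relative_PCA_two_xPy_z_identity {K A : Type*} [Field K] [CharZero K]
    [AddCommGroup A] [Module K A]
    (mul : A →ₗ[K] A →ₗ[K] A)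
    (hcomm : ∀ x y : A, mul x y = mul y x)
    (hassoc : ∀ x y z : A, mul (mul x y) z = mul x (mul y z))
    (circ : A →ₗ[K] A →ₗ[K] A)
    (br : A → A → A)
    (hbr : ∀ x y : A, br x y = circ x y - circ y x)
    (hapl1 : ∀ x y z : A,
      circ x (circ y z) - circ y (circ x z) = circ (br y x) z)
    (hapl2 : ∀ x y z : A,
      circ (br x y) z + circ (br y z) x + circ (br z x) y = 0)
    (P Q : A →ₗ[K] A)
    (hPmul : ∀ x y : A, P (mul x y) = mul (P x) y + mul x (P y))
    (hPbr : ∀ x y : A, P (br x y) = br (P x) y + br x (P y))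
    (hLeib : ∀ x y z : A, br z (mul x y)
      = mul (br z x) y + mul x (br z y) + mul (mul x y) (P z))
    (hpca1 : ∀ x y : A, mul x (Q y) - mul (P x) y - Q (mul x y) = 0)
    (hpca2 : ∀ x y : A, circ x (Q y) - circ (P x) y - Q (circ x y) = 0)
    (hpca3 : ∀ x y z : A,
      mul x (circ y z) - circ y (mul x z) + mul (br x y) z
        - mul (mul x (P y)) z = 0)
    (hpca4 : ∀ x y z : A,
      circ (mul x y) z - circ y (mul x z) - circ x (mul y z)
        + Q (mul (mul x y) z) = 0)
    :
    ∀ x y z : A, 2 • mul (mul x (P y)) z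
      = 2 • mul (br x y) z + mul x (circ z y) - circ (mul x z) y :=
  relative_PCA_two_xPy_z_identity_general mul hcomm hassoc circ br hbr P hLeib hpca3
end

section
/- Let (A,≻,≺) be a pre-APL algebra. Then x⋄y := x≻y − y≺x defines a pre-Lie algebra structure on A, i.e. (x⋄y)⋄z − x⋄(y⋄z) = (y⋄x)⋄z − y⋄(x⋄z). Moreover the sub-adjacent Lie bracket of ⋄ coincides with that of the anti-pre-Lie product x∘y := x≻y + x≺y. -/
/-!
Expanding the antisymmetrised associator of `x ⋄ y = x ≻ y - y ≺ x` bilinearly, the terms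
`(x ∘ y - y ∘ x) ≻ z` and `z ≺ (x ∘ y - y ∘ x)` are rewritten by axioms (1) and (2);
the mixed terms `x ≻ (z ≺ y)` then cancel and what is left is twice the difference
of the two sides of axiom (3).
-/

namespace PreAPL

variable {R A : Type*} [CommRing R] [AddCommGroup A] [Module R A]
  (succ prec : A →ₗ[R] A →ₗ[R] A)

def diamond (x y : A) : A := succ x y - prec y x

def circ (x y : A) : A := succ x y + prec x y

structure IsPreAPL : Prop where
  succ_succ_comm : ∀ x y z : A,
    succ x (succ y z) - succ y (succ x z)
      = succ (circ succ prec y x) z - succ (circ succ prec x y) z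
  prec_circ : ∀ x y z : A,
    prec z (circ succ prec x y) = succ x (prec z y) + prec (succ x z) y - prec (prec z x) y
  succ_succ_comm_eq_prec : ∀ x y z : A,
    succ x (succ y z) - succ y (succ x z)
      = prec (succ y z) x - prec (succ x z) y - prec (prec z y) x + prec (prec z x) y

theorem diamond_sub_diamond_comm (x y : A) :
    diamond succ prec x y - diamond succ prec y x
      = circ succ prec x y - circ succ prec y x := by
  simp only [diamond, circ]
  abel

theorem diamond_associator_antisymm (x y z : A) :
    diamond succ prec (diamond succ prec x y) z - diamond succ prec x (diamond succ prec y z)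
        - (diamond succ prec (diamond succ prec y x) z
          - diamond succ prec y (diamond succ prec x z))
      = succ (circ succ prec x y - circ succ prec y x) z
        - prec z (circ succ prec x y - circ succ prec y x)
        - (succ x (succ y z) - succ y (succ x z))
        + succ x (prec z y) - succ y (prec z x)
        + prec (succ y z) x - prec (succ x z) y - prec (prec z y) x + prec (prec z x) y := by
  simp only [diamond, circ, map_sub, map_add, LinearMap.sub_apply, LinearMap.add_apply]
  abel

variable {succ prec}

theorem IsPreAPL.succ_circ_commutator (h : IsPreAPL succ prec) (x y z : A) :
    succ (circ succ prec x y - circ succ prec y x) z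
      = -(succ x (succ y z) - succ y (succ x z)) := by
  rw [h.succ_succ_comm, neg_sub, map_sub, LinearMap.sub_apply]

theorem IsPreAPL.prec_circ_commutator (h : IsPreAPL succ prec) (x y z : A) :
    prec z (circ succ prec x y - circ succ prec y x)
      = succ x (prec z y) - succ y (prec z x) + prec (succ x z) y - prec (succ y z) x
        - prec (prec z x) y + prec (prec z y) x := by
  rw [map_sub, h.prec_circ, h.prec_circ]
  abel

theorem IsPreAPL.diamond_preLie (h : IsPreAPL succ prec) (x y z : A) :
    diamond succ prec (diamond succ prec x y) z - diamond succ prec x (diamond succ prec y z)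
      = diamond succ prec (diamond succ prec y x) z
        - diamond succ prec y (diamond succ prec x z) := by
  rw [← sub_eq_zero, diamond_associator_antisymm, h.succ_circ_commutator,
    h.prec_circ_commutator, h.succ_succ_comm_eq_prec x y z]
  abel

end PreAPL

theorem pre_APL_subadjacent_pre_lie_general {K A : Type*} [Field K]
    [AddCommGroup A] [Module K A]
    (succ prec : A →ₗ[K] A →ₗ[K] A)
    (h1 : ∀ x y z : A,
      succ x (succ y z) - succ y (succ x z)
        = succ (succ y x + prec y x) z - succ (succ x y + prec x y) z)
    (h2 : ∀ x y z : A,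
      prec z (succ x y + prec x y)
        = succ x (prec z y) + prec (succ x z) y - prec (prec z x) y)
    (h3 : ∀ x y z : A,
      succ x (succ y z) - succ y (succ x z)
        = prec (succ y z) x - prec (succ x z) y - prec (prec z y) x
          + prec (prec z x) y)
    (dia : A → A → A)
    (hdia : ∀ x y : A, dia x y = succ x y - prec y x)
    (circ : A → A → A)
    (hcirc : ∀ x y : A, circ x y = succ x y + prec x y) :
    (∀ x y z : A,
      dia (dia x y) z - dia x (dia y z) = dia (dia y x) z - dia y (dia x z)) ∧
    (∀ x y : A, dia x y - dia y x = circ x y - circ y x) := by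
  obtain rfl : dia = PreAPL.diamond succ prec := funext₂ hdia
  obtain rfl : circ = PreAPL.circ succ prec := funext₂ hcirc
  have h : PreAPL.IsPreAPL succ prec := ⟨h1, h2, h3⟩
  exact ⟨h.diamond_preLie, PreAPL.diamond_sub_diamond_comm succ prec⟩

/-- For a pre-APL algebra (A,≻,≺), x⋄y = x≻y − y≺x is a pre-Lie
product whose commutator coincides with that of the anti-pre-Lie product
x∘y = x≻y + x≺y. -/
theorem pre_APL_subadjacent_pre_lie {K A : Type*} [Field K] [CharZero K]
    [AddCommGroup A] [Module K A]
    (succ prec : A →ₗ[K] A →ₗ[K] A)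
    (h1 : ∀ x y z : A,
      succ x (succ y z) - succ y (succ x z)
        = succ (succ y x + prec y x) z - succ (succ x y + prec x y) z)
    (h2 : ∀ x y z : A,
      prec z (succ x y + prec x y)
        = succ x (prec z y) + prec (succ x z) y - prec (prec z x) y)
    (h3 : ∀ x y z : A,
      succ x (succ y z) - succ y (succ x z)
        = prec (succ y z) x - prec (succ x z) y - prec (prec z y) x
          + prec (prec z x) y)
    (dia : A → A → A)
    (hdia : ∀ x y : A, dia x y = succ x y - prec y x)
    (circ : A → A → A)
    (hcirc : ∀ x y : A, circ x y = succ x y + prec x y) :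
    (∀ x y z : A,
      dia (dia x y) z - dia x (dia y z) = dia (dia y x) z - dia y (dia x z)) ∧
    (∀ x y : A, dia x y - dia y x = circ x y - circ y x) :=
  pre_APL_subadjacent_pre_lie_general succ prec h1 h2 h3 dia hdia circ hcirc
end

section
/- Let (A,⋆,P,Q) be an admissible differential Zinbiel algebra, set x≻y = Q(x⋆y) − P(x)⋆y and x≺y = Q(y⋆x) − y⋆P(x), and define x⋄y = x≻y − y≺x = Q(x⋆y) − P(x)⋆y − Q(x⋆y) + x⋆P(y) = x⋆P(y) − P(x)⋆y. Then (A,⋄) is a pre-Lie algebra. -/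
/-- On an admissible differential Zinbiel algebra (A,⋆,P,Q), the
operation x⋄y = x⋆P(y) − P(x)⋆y is a pre-Lie product. -/
theorem admissible_zinbiel_pre_lie {K A : Type*} [Field K] [CharZero K]
    [AddCommGroup A] [Module K A]
    (star : A →ₗ[K] A →ₗ[K] A)
    (hzin : ∀ x y z : A,
      star x (star y z) = star (star y x) z + star (star x y) z)
    (P Q : A →ₗ[K] A)
    (hP : ∀ x y : A, P (star x y) = star (P x) y + star x (P y))
    (hQ1 : ∀ x y : A, star (Q x) y - star x (P y) - Q (star x y) = 0)
    (hQ2 : ∀ x y : A, star x (Q y) - star (P x) y - Q (star x y) = 0)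
    (dia : A → A → A)
    (hdia : ∀ x y : A, dia x y = star x (P y) - star (P x) y) :
    ∀ x y z : A,
      dia (dia x y) z - dia x (dia y z) = dia (dia y x) z - dia y (dia x z) := by
  intro x y z
  simp only [hdia, map_sub, map_add, LinearMap.sub_apply, LinearMap.add_apply, hP, hzin]
  abel
end

section
/- Let (A,⋆,P,Q) be an admissible differential Zinbiel algebra, with x·y = x⋆y + y⋆x the descendent commutative product, ⋄ defined by x⋄y = x⋆P(y) − P(x)⋆y, and [x,y] = x⋄y − y⋄x. Then the identity x⋆(y⋄z) − [x,y]⋆z − y⋄(x⋆z) + (x·P(y))⋆z = 0 holds for all x,y,z ∈ A. -/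
/-! Expanding `⋄`, `[-,-]` and `·`, and `P(x ⋆ z)` by the Leibniz rule, the expression collapses to
`(x⋆(y⋆Pz) − y⋆(x⋆Pz)) + (Py⋆(x⋆z) − x⋆(Py⋆z)) + ((Px⋆y)⋆z + (y⋆Px)⋆z − y⋆(Px⋆z))`.
The first two brackets vanish because a Zinbiel product is left-commutative (the right-hand side of
the Zinbiel identity is symmetric in `x, y`), and the third is the Zinbiel identity itself. -/

theorem zinbiel_left_comm {R A : Type*} [CommSemiring R] [AddCommMonoid A] [Module R A]
    (star : A →ₗ[R] A →ₗ[R] A)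
    (hzin : ∀ x y z : A, star x (star y z) = star (star y x) z + star (star x y) z)
    (x y z : A) : star x (star y z) = star y (star x z) := by
  rw [hzin, hzin, add_comm]

theorem admissible_zinbiel_compat_identity_general {K A : Type*} [Field K]
    [AddCommGroup A] [Module K A]
    (star : A →ₗ[K] A →ₗ[K] A)
    (hzin : ∀ x y z : A,
      star x (star y z) = star (star y x) z + star (star x y) z)
    (P : A →ₗ[K] A)
    (hP : ∀ x y : A, P (star x y) = star (P x) y + star x (P y))
    (mul : A → A → A)
    (hmul : ∀ x y : A, mul x y = star x y + star y x)
    (dia : A → A → A)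
    (hdia : ∀ x y : A, dia x y = star x (P y) - star (P x) y)
    (br : A → A → A)
    (hbrdef : ∀ x y : A, br x y = dia x y - dia y x) :
    ∀ x y z : A,
      star x (dia y z) - star (br x y) z - dia y (star x z)
        + star (mul x (P y)) z = 0 := by
  intro x y z
  calc star x (dia y z) - star (br x y) z - dia y (star x z) + star (mul x (P y)) z
      = (star x (star y (P z)) - star y (star x (P z)))
          + (star (P y) (star x z) - star x (star (P y) z))
          + (star (star (P x) y) z + star (star y (P x)) z - star y (star (P x) z)) := by
        simp only [hbrdef, hdia, hmul, hP, map_add, map_sub, LinearMap.add_apply,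
          LinearMap.sub_apply]
        abel
    _ = 0 := by
        rw [zinbiel_left_comm star hzin x y, zinbiel_left_comm star hzin (P y) x, hzin y (P x) z]
        abel

/-- In an admissible differential Zinbiel algebra, with
x·y = x⋆y + y⋆x, x⋄y = x⋆P(y) − P(x)⋆y and [x,y] = x⋄y − y⋄x, the identity
x⋆(y⋄z) − [x,y]⋆z − y⋄(x⋆z) + (x·P(y))⋆z = 0 holds. -/
theorem admissible_zinbiel_compat_identity {K A : Type*} [Field K] [CharZero K]
    [AddCommGroup A] [Module K A]
    (star : A →ₗ[K] A →ₗ[K] A)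
    (hzin : ∀ x y z : A,
      star x (star y z) = star (star y x) z + star (star x y) z)
    (P Q : A →ₗ[K] A)
    (hP : ∀ x y : A, P (star x y) = star (P x) y + star x (P y))
    (hQ1 : ∀ x y : A, star (Q x) y = star x (P y) + Q (star x y))
    (hQ2 : ∀ x y : A, star x (Q y) = star (P x) y + Q (star x y))
    (mul : A → A → A)
    (hmul : ∀ x y : A, mul x y = star x y + star y x)
    (dia : A → A → A)
    (hdia : ∀ x y : A, dia x y = star x (P y) - star (P x) y)
    (br : A → A → A)
    (hbrdef : ∀ x y : A, br x y = dia x y - dia y x) :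
    ∀ x y z : A,
      star x (dia y z) - star (br x y) z - dia y (star x z)
        + star (mul x (P y)) z = 0 :=
  admissible_zinbiel_compat_identity_general star hzin P hP mul hmul dia hdia br hbrdef
end

section
/- On the Laurent polynomial algebra A = K[t,t⁻¹] with product tᵐ·tⁿ = tᵐ⁺ⁿ, derivation P(tⁿ) = n tⁿ⁻¹, bracket [tᵐ,tⁿ] = (n−m)tᵐ⁺ⁿ⁻¹, and for a fixed integer a the bilinear form Bₐ(tᵐ,tⁿ) = δ_{m+n,a}: Bₐ is symmetric, nondegenerate, invariant on the commutative product, and a commutative 2-cocycle on the bracket, i.e. Bₐ([x,y],z) + Bₐ([y,z],x) + Bₐ([z,x],y) = 0. -/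
/-!
The form is `Bₐ(f, g) = [tᵃ](f g)`, the coefficient of `tᵃ` in the product. Symmetry and
invariance are then commutativity and associativity of the product, and pairing with `tᵃ⁻ᵐ`
reads off the coefficient of `tᵐ`, which gives nondegeneracy. The cocycle identity holds before
taking coefficients: `[f,g] h + [g,h] f + [h,f] g = 0` in any commutative ring, for any map `P`.
-/

open LaurentPolynomial

namespace LaurentPolynomial

variable {R : Type*} [Semiring R]

lemma coeff_T (n : ℤ) : AddMonoidAlgebra.coeff (T n : R[T;T⁻¹]) = Finsupp.single n 1 := rfl

lemma coeff_mul_apply_eq_sum (f g : R[T;T⁻¹]) (a : ℤ) :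
    AddMonoidAlgebra.coeff (f * g) a =
      (AddMonoidAlgebra.coeff f).sum fun m c => c * AddMonoidAlgebra.coeff g (a - m) := by
  rw [AddMonoidAlgebra.coeff_mul_apply_left]
  exact Finsupp.sum_congr fun m _ => by rw [neg_add_eq_sub]

lemma coeff_mul_T_sub_apply (f : R[T;T⁻¹]) (a m : ℤ) :
    AddMonoidAlgebra.coeff (f * T (a - m)) a = AddMonoidAlgebra.coeff f m := by
  rw [T, AddMonoidAlgebra.coeff_mul_single_apply, mul_one, ← sub_eq_add_neg, sub_sub_cancel]

end LaurentPolynomial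

theorem cyclic_sum_mul_sub_mul_eq_zero {R : Type*} [CommRing R] (P : R → R) (f g h : R) :
    (f * P g - P f * g) * h + (g * P h - P g * h) * f + (h * P f - P h * f) * g = 0 := by
  ring

theorem laurent_invariant_two_cocycle_general {K : Type*} [Field K] (a : ℤ)
    (P : LaurentPolynomial K → LaurentPolynomial K)
    (hP : ∀ f : LaurentPolynomial K,
      P f = Finsupp.sum (AddMonoidAlgebra.coeff f) (fun n c => c • (n : K) • T (n - 1)))
    (B : LaurentPolynomial K → LaurentPolynomial K → K)
    (hB : ∀ f g : LaurentPolynomial K,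
      B f g = Finsupp.sum (AddMonoidAlgebra.coeff f) (fun m c => c * (AddMonoidAlgebra.coeff g) (a - m)))
    (br : LaurentPolynomial K → LaurentPolynomial K → LaurentPolynomial K)
    (hbr : ∀ f g : LaurentPolynomial K, br f g = f * P g - P f * g) :
    (∀ n : ℤ, P (T n) = (n : K) • T (n - 1)) ∧
    (∀ m n : ℤ, br (T m) (T n) = ((n - m : ℤ) : K) • T (m + n - 1)) ∧
    (∀ m n : ℤ, B (T m) (T n) = if m + n = a then 1 else 0) ∧
    (∀ f g : LaurentPolynomial K, B f g = B g f) ∧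
    (∀ f : LaurentPolynomial K, (∀ g, B f g = 0) → f = 0) ∧
    (∀ f g h : LaurentPolynomial K, B (f * g) h = B f (g * h)) ∧
    (∀ f g h : LaurentPolynomial K,
      B (br f g) h + B (br g h) f + B (br h f) g = 0) := by
  have hB_coeff (f g : K[T;T⁻¹]) : B f g = AddMonoidAlgebra.coeff (f * g) a := by
    rw [hB, coeff_mul_apply_eq_sum]
  have hP_T (n : ℤ) : P (T n) = (n : K) • T (n - 1) := by
    rw [hP, coeff_T, Finsupp.sum_single_index (by simp), one_smul]
  refine ⟨hP_T, fun m n => ?_, fun m n => ?_, fun f g => by rw [hB_coeff, hB_coeff, mul_comm],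
    fun f hf => ?_, fun f g h => by rw [hB_coeff, hB_coeff, mul_assoc], fun f g h => ?_⟩
  · rw [hbr, hP_T, hP_T, mul_smul_comm, smul_mul_assoc, ← T_add, ← T_add,
      show m + (n - 1) = m + n - 1 by ring, show m - 1 + n = m + n - 1 by ring, ← sub_smul]
    push_cast
    ring_nf
  · rw [hB_coeff, ← T_add, coeff_T, Finsupp.single_apply]
  · ext m
    simpa [hB_coeff, coeff_mul_T_sub_apply] using hf (T (a - m))
  · simp only [hB_coeff, ← Finsupp.add_apply, ← AddMonoidAlgebra.coeff_add, hbr,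
      cyclic_sum_mul_sub_mul_eq_zero P f g h, AddMonoidAlgebra.coeff_zero, Finsupp.zero_apply]

/-- On the Laurent polynomial algebra K[t,t⁻¹] with derivation
P(tⁿ) = n tⁿ⁻¹, Witt bracket [x,y] = x·P(y) − P(x)·y (so [tᵐ,tⁿ] = (n−m)tᵐ⁺ⁿ⁻¹)
and bilinear form Bₐ(tᵐ,tⁿ) = δ_{m+n,a}, the form Bₐ is symmetric, nondegenerate,
invariant on the product and a commutative 2-cocycle on the bracket. -/
theorem laurent_invariant_two_cocycle {K : Type*} [Field K] [CharZero K] (a : ℤ)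
    (P : LaurentPolynomial K → LaurentPolynomial K)
    (hP : ∀ f : LaurentPolynomial K,
      P f = Finsupp.sum (AddMonoidAlgebra.coeff f) (fun n c => c • (n : K) • T (n - 1)))
    (B : LaurentPolynomial K → LaurentPolynomial K → K)
    (hB : ∀ f g : LaurentPolynomial K,
      B f g = Finsupp.sum (AddMonoidAlgebra.coeff f) (fun m c => c * (AddMonoidAlgebra.coeff g) (a - m)))
    (br : LaurentPolynomial K → LaurentPolynomial K → LaurentPolynomial K)
    (hbr : ∀ f g : LaurentPolynomial K, br f g = f * P g - P f * g) :
    (∀ n : ℤ, P (T n) = (n : K) • T (n - 1)) ∧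
    (∀ m n : ℤ, br (T m) (T n) = ((n - m : ℤ) : K) • T (m + n - 1)) ∧
    (∀ m n : ℤ, B (T m) (T n) = if m + n = a then 1 else 0) ∧
    (∀ f g : LaurentPolynomial K, B f g = B g f) ∧
    (∀ f : LaurentPolynomial K, (∀ g, B f g = 0) → f = 0) ∧
    (∀ f g h : LaurentPolynomial K, B (f * g) h = B f (g * h)) ∧
    (∀ f g h : LaurentPolynomial K,
      B (br f g) h + B (br g h) f + B (br h f) g = 0) :=
  laurent_invariant_two_cocycle_general a P hP B hB br hbr
end
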